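/- Let μ : ℝ → ℝ be nondecreasing and differentiable with μ'(x) ≤ k_μ for all x ∈ ℝ. Let Θ*, Θ̂, X₁, X₂ be elements of a real inner product space with ‖X₁‖ ≤ 1, ‖X₂‖ ≤ 1, and suppose ⟨X₁ − X₂, Θ̂⟩ ≤ 0. Then μ(⟨X₁, Θ*⟩) − μ(⟨X₂, Θ*⟩) ≤ 2 k_μ ‖Θ* − Θ̂‖. -/
import Mathlib

open scoped RealInnerProductSpace

lemma aux_deriv_nonneg {μ : ℝ → ℝ} (hm : Monotone μ) (hd : Differentiable ℝ μ) (x : ℝ) :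
    0 ≤ deriv μ x := by
  have h := (hd x).hasDerivAt
  rw [hasDerivAt_iff_tendsto_slope] at h
  refine ge_of_tendsto h ?_
  filter_upwards [self_mem_nhdsWithin] with y hy
  have hy' : y ≠ x := hy
  rw [slope_def_field]
  rcases lt_or_gt_of_ne hy' with h' | h'
  · exact div_nonneg_iff.mpr (Or.inr ⟨by simpa using hm h'.le, by linarith⟩)
  · exact div_nonneg (by simpa using hm h'.le) (by linarith)

/-- Exploitation-phase instantaneous regret bound: if `μ` is nondecreasing and
differentiable with `μ' ≤ k_μ` on ℝ, `‖X₁‖ ≤ 1`, `‖X₂‖ ≤ 1`, and the greedy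
condition `⟨X₁ − X₂, Θ̂⟩ ≤ 0` holds, then
`μ(⟨X₁,Θ*⟩) − μ(⟨X₂,Θ*⟩) ≤ 2 k_μ ‖Θ* − Θ̂‖`. -/
theorem exploitation_instantaneous_regret_bound
    {V : Type*} [NormedAddCommGroup V] [InnerProductSpace ℝ V]
    (μ : ℝ → ℝ) (kμ : ℝ)
    (hmono : Monotone μ)
    (hdiff : Differentiable ℝ μ)
    (hderiv : ∀ x : ℝ, deriv μ x ≤ kμ)
    (Θs Θh X₁ X₂ : V)
    (hX₁ : ‖X₁‖ ≤ 1) (hX₂ : ‖X₂‖ ≤ 1)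
    (hgreedy : ⟪X₁ - X₂, Θh⟫ ≤ 0) :
    μ ⟪X₁, Θs⟫ - μ ⟪X₂, Θs⟫ ≤ 2 * kμ * ‖Θs - Θh‖ := by
  have hk : 0 ≤ kμ := le_trans (aux_deriv_nonneg hmono hdiff 0) (hderiv 0)
  set a := (⟪X₁, Θs⟫ : ℝ)
  set b := (⟪X₂, Θs⟫ : ℝ)
  rcases le_or_gt a b with hab | hab
  · have : μ a ≤ μ b := hmono hab
    nlinarith [norm_nonneg (Θs - Θh)]
  · -- Lipschitz bound
    have hlip : ‖μ a - μ b‖ ≤ kμ * ‖a - b‖ := by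
      refine Convex.norm_image_sub_le_of_norm_deriv_le (s := Set.univ)
        (fun x _ => hdiff x) (fun x _ => ?_) convex_univ trivial trivial
      rw [Real.norm_eq_abs, abs_of_nonneg (aux_deriv_nonneg hmono hdiff x)]
      exact hderiv x
    have h1 : μ a - μ b ≤ kμ * (a - b) := by
      have := (abs_le.mp (by simpa [Real.norm_eq_abs] using hlip)).2
      rwa [abs_of_pos (by linarith : (0:ℝ) < a - b)] at this
    have h2 : a - b = ⟪X₁ - X₂, Θs⟫ := by simp [a, b, inner_sub_left]
    have h3 : (⟪X₁ - X₂, Θs⟫ : ℝ) ≤ ⟪X₁ - X₂, Θs - Θh⟫ := by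
      rw [inner_sub_right]; linarith
    have h4 : (⟪X₁ - X₂, Θs - Θh⟫ : ℝ) ≤ ‖X₁ - X₂‖ * ‖Θs - Θh‖ :=
      real_inner_le_norm _ _
    have h5 : ‖X₁ - X₂‖ ≤ 2 := by
      calc ‖X₁ - X₂‖ ≤ ‖X₁‖ + ‖X₂‖ := norm_sub_le _ _
        _ ≤ 2 := by linarith
    have h6 : a - b ≤ 2 * ‖Θs - Θh‖ := by
      calc a - b = ⟪X₁ - X₂, Θs⟫ := h2
        _ ≤ ⟪X₁ - X₂, Θs - Θh⟫ := h3
        _ ≤ ‖X₁ - X₂‖ * ‖Θs - Θh‖ := h4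
        _ ≤ 2 * ‖Θs - Θh‖ := by
            exact mul_le_mul_of_nonneg_right h5 (norm_nonneg _)
    calc μ a - μ b ≤ kμ * (a - b) := h1
      _ ≤ kμ * (2 * ‖Θs - Θh‖) := mul_le_mul_of_nonneg_left h6 hk
      _ = 2 * kμ * ‖Θs - Θh‖ := by ring
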